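/- arXiv:1309.7177 — 3 statements merged into one kernel-verified Lean document; each statement's English description precedes it below -/
import Mathlib

section
/- Let C : B^m × B^n → B^k be such that some component equals an argument of the second group, i.e., the j-th component satisfies C(v,w)_j = w_i for all (v,w). Then the number of equivalence classes of ∼_C on B^m equals the number of equivalence classes of ∼_{C'} on B^m, where C' : B^m × B^{n-1} → B^{k-1} is obtained by: first adding component j (mod 2) to every other component containing argument w_i (equivalently, substituting so that w_i occurs only in component j), then deleting component j and argument w_i. -/
/-- `sim F v v'` : the relation `v ∼_F v'`, i.e. there exist second-group
arguments `w, w'` with `F v w = F v' w'`. -/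
def sim {α β γ : Type*} (F : α → β → γ) (v v' : α) : Prop := ∃ w w', F v w = F v' w'

/-- The set of classes of the relation `sim F` (the class of each point). -/
def classes {α β γ : Type*} (F : α → β → γ) : Set (Set α) :=
  {S | ∃ v, S = {v' | sim F v v'}}

/-- Lemma 8 (Corollary of Lemma 5/6): if some component equals a second-group
argument `w i`, one may eliminate `w i` from all other components (row
reduction) and delete component `j` and argument `w i`, preserving the number
of equivalence classes. -/
theorem stmt_6 (m n k : ℕ) (i : Fin n) (j : Fin k)
    (A : Matrix (Fin k) (Fin m) (ZMod 2)) (B : Matrix (Fin k) (Fin n) (ZMod 2))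
    (hrow : ∀ l, B j l = if l = i then 1 else 0)
    (hArow : ∀ l, A j l = 0)   -- component j is exactly the argument w i
    (C : (Fin m → ZMod 2) → (Fin n → ZMod 2) → (Fin k → ZMod 2))
    (hC : ∀ v w, C v w = A.mulVec v + B.mulVec w)
    (C' : (Fin m → ZMod 2) → ({l : Fin n // l ≠ i} → ZMod 2) →
      ({r : Fin k // r ≠ j} → ZMod 2))
    (hC' : ∀ v w r, C' v w r =
      (∑ l, (A r.1 l + B r.1 i * A j l) * v l) +
      ∑ l : {l : Fin n // l ≠ i}, B r.1 l.1 * w l) :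
    Nat.card (classes C) = Nat.card (classes C') := by
  have hsub : ∀ (w : Fin n → ZMod 2) (r : Fin k),
      (∑ l : {l : Fin n // l ≠ i}, B r l.1 * w l.1) + B r i * w i
        = ∑ l, B r l * w l := by
    intro w r
    rw [← Finset.sum_subtype (Finset.univ.erase i)
      (fun x => by simp [Finset.mem_erase]) (fun l => B r l * w l)]
    rw [add_comm]
    exact Finset.add_sum_erase _ (fun l => B r l * w l) (Finset.mem_univ i)
  have decomp : ∀ (v : Fin m → ZMod 2) (w : Fin n → ZMod 2) (r : {r : Fin k // r ≠ j}),
      C' v (fun l => w l.1) r + B r.1 i * w i = C v w r.1 := by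
    intro v w r
    rw [hC', hC]
    simp only [hArow, mul_zero, add_zero, Matrix.mulVec, dotProduct, Pi.add_apply]
    rw [add_assoc, hsub w r.1]
  have hcomp : ∀ (v : Fin m → ZMod 2) (w : Fin n → ZMod 2), C v w j = w i := by
    intro v w
    rw [hC]
    simp [Matrix.mulVec, dotProduct, hArow, hrow, Finset.sum_ite_eq']
  have key : ∀ v v', sim C v v' ↔ sim C' v v' := by
    intro v v'
    constructor
    · rintro ⟨w, w', h⟩
      have hwi : w i = w' i := by
        have := congrFun h j; rwa [hcomp, hcomp] at this
      refine ⟨fun l => w l.1, fun l => w' l.1, ?_⟩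
      funext r
      have hr := congrFun h r.1
      rw [← decomp v w r, ← decomp v' w' r, hwi] at hr
      exact add_right_cancel hr
    · rintro ⟨w, w', h⟩
      refine ⟨fun l => if h : l = i then 0 else w ⟨l, h⟩,
              fun l => if h : l = i then 0 else w' ⟨l, h⟩, ?_⟩
      funext r
      by_cases hr : r = j
      · subst hr; rw [hcomp, hcomp]; simp
      · have := congrFun h ⟨r, hr⟩
        rw [← decomp v _ ⟨r, hr⟩, ← decomp v' _ ⟨r, hr⟩]
        have e1 : (fun l : {l : Fin n // l ≠ i} =>
            (if h : l.1 = i then (0 : ZMod 2) else w ⟨l.1, h⟩)) = w := by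
          funext l; rw [dif_neg l.2]
        have e2 : (fun l : {l : Fin n // l ≠ i} =>
            (if h : l.1 = i then (0 : ZMod 2) else w' ⟨l.1, h⟩)) = w' := by
          funext l; rw [dif_neg l.2]
        rw [e1, e2, this]; simp
  have : classes C = classes C' := by
    ext S
    constructor
    · rintro ⟨v, rfl⟩; exact ⟨v, by ext v'; exact key v v'⟩
    · rintro ⟨v, rfl⟩; exact ⟨v, by ext v'; exact (key v v').symm⟩
  rw [this]
end

section
/- Let C = B ∘ (X, Y) where X : B^m → B^{m₁}, Y : B^m × B^n → B^{n₁}, B : B^{m₁} × B^{n₁} → B^k are functions such that (i) X is surjective, and (ii) for every v ∈ B^m the map Y(v, ·) : B^n → B^{n₁} is surjective. Here C(v,w) = B(X(v), Y(v,w)). Then the number of equivalence classes of ∼_C in B^m equals the number of equivalence classes of ∼_B in B^{m₁}; moreover the map sending the class of v to the class of X(v) is a well-defined bijection between the quotient sets. -/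
/-- Lemma 9: factoring through surjections. The class map `[v] ↦ [X v]` is a
well-defined bijection between the sets of classes, hence the numbers of
classes coincide. -/
theorem stmt_7 (m n m₁ n₁ k : ℕ)
    (X : (Fin m → ZMod 2) → (Fin m₁ → ZMod 2))
    (Y : (Fin m → ZMod 2) → (Fin n → ZMod 2) → (Fin n₁ → ZMod 2))
    (B : (Fin m₁ → ZMod 2) → (Fin n₁ → ZMod 2) → (Fin k → ZMod 2))
    (hX : Function.Surjective X)
    (hY : ∀ v, Function.Surjective (Y v))
    (C : (Fin m → ZMod 2) → (Fin n → ZMod 2) → (Fin k → ZMod 2))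
    (hC : ∀ v w, C v w = B (X v) (Y v w)) :
    (∃ e : classes C → classes B, Function.Bijective e ∧
      ∀ v : Fin m → ZMod 2,
        e ⟨{v' | sim C v v'}, ⟨v, rfl⟩⟩ = ⟨{y | sim B (X v) y}, ⟨X v, rfl⟩⟩) ∧
    Nat.card (classes C) = Nat.card (classes B) := by
  -- key equivalence
  have key : ∀ v v', sim C v v' ↔ sim B (X v) (X v') := by
    intro v v'
    constructor
    · rintro ⟨w, w', h⟩
      exact ⟨Y v w, Y v' w', by rwa [hC, hC] at h⟩
    · rintro ⟨u, u', h⟩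
      obtain ⟨w, hw⟩ := hY v u
      obtain ⟨w', hw'⟩ := hY v' u'
      exact ⟨w, w', by rw [hC, hC, hw, hw']; exact h⟩
  -- if C-classes of v and v₀ coincide then B-classes of X v, X v₀ coincide
  have wd : ∀ v v₀ : Fin m → ZMod 2,
      {v' | sim C v v'} = {v' | sim C v₀ v'} →
      {y | sim B (X v) y} = {y | sim B (X v₀) y} := by
    intro v v₀ h
    ext y
    obtain ⟨v', hv'⟩ := hX y
    have h' := Set.ext_iff.mp h v'
    simp only [Set.mem_setOf_eq] at h' ⊢
    rw [← hv', ← key, ← key]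
    exact h'
  -- the map
  let e : classes C → classes B :=
    fun S => ⟨{y | sim B (X S.property.choose) y}, ⟨X S.property.choose, rfl⟩⟩
  have he : ∀ v : Fin m → ZMod 2,
      e ⟨{v' | sim C v v'}, ⟨v, rfl⟩⟩ = ⟨{y | sim B (X v) y}, ⟨X v, rfl⟩⟩ := by
    intro v
    have hS : ∃ v₀, ({v' | sim C v v'} : Set _) = {v' | sim C v₀ v'} := ⟨v, rfl⟩
    exact Subtype.ext (wd _ _ hS.choose_spec.symm)
  refine ⟨⟨e, ?_, he⟩, ?_⟩
  · constructor
    · rintro ⟨S, v, rfl⟩ ⟨S', v', rfl⟩ h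
      rw [he, he] at h
      have h' := Subtype.ext_iff.mp h
      apply Subtype.ext
      ext v''
      have := Set.ext_iff.mp h' (X v'')
      simp only [Set.mem_setOf_eq] at this ⊢
      rw [key, key]
      exact this
    · rintro ⟨T, x, rfl⟩
      obtain ⟨v, rfl⟩ := hX x
      exact ⟨⟨{v' | sim C v v'}, ⟨v, rfl⟩⟩, he v⟩
  · -- cardinality
    obtain ⟨f, hf, _⟩ : (∃ e : classes C → classes B, Function.Bijective e ∧
        ∀ v : Fin m → ZMod 2,
          e ⟨{v' | sim C v v'}, ⟨v, rfl⟩⟩ = ⟨{y | sim B (X v) y}, ⟨X v, rfl⟩⟩) := by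
      refine ⟨e, ?_, he⟩
      constructor
      · rintro ⟨S, v, rfl⟩ ⟨S', v', rfl⟩ h
        rw [he, he] at h
        have h' := Subtype.ext_iff.mp h
        apply Subtype.ext
        ext v''
        have := Set.ext_iff.mp h' (X v'')
        simp only [Set.mem_setOf_eq] at this ⊢
        rw [key, key]
        exact this
      · rintro ⟨T, x, rfl⟩
        obtain ⟨v, rfl⟩ := hX x
        exact ⟨⟨{v' | sim C v v'}, ⟨v, rfl⟩⟩, he v⟩
    exact Nat.card_eq_of_bijective f hf
end

section
/- Consider the 𝔽₂-linear map C : (ZMod 2)^7 → (ZMod 2)^3 given by z₁ = u₁⊕u₇⊕u₈⊕u₉, z₂ = u₂⊕u₆⊕u₈⊕u₉, z₇ = u₃⊕u₆⊕u₇⊕u₉ (coordinates named u₁,u₂,u₃,u₆,u₇,u₈,u₉). With first-group coordinates {u₁,u₂,u₃,u₇,u₈,u₉} and second-group coordinate {u₆}, the equivalence relation (v' ∼ v'' iff ∃ second-group values making images equal) has exactly 4 classes. -/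
private lemma key_aux : ∀ a b c d e f a' b' c' d' e' f' w w' : ZMod 2,
    (a + d + e + f, b + w + e + f, c + w + d + f)
      = (a' + d' + e' + f', b' + w' + e' + f', c' + w' + d' + f')
    → (a + d + e + f = a' + d' + e' + f' ∧ b + c + d + e = b' + c' + d' + e') := by
  intro a b c d e f a' b' c' d' e' f' w w' h
  rw [Prod.mk.injEq, Prod.mk.injEq] at h
  obtain ⟨h1, h2, h3⟩ := h
  refine ⟨h1, ?_⟩
  have hw : w + w = 0 := CharTwo.add_self_eq_zero w
  have hw' : w' + w' = 0 := CharTwo.add_self_eq_zero w'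
  have hf : f + f = 0 := CharTwo.add_self_eq_zero f
  have hf' : f' + f' = 0 := CharTwo.add_self_eq_zero f'
  linear_combination h2 + h3 - hw - hf + hw' + hf' 

private lemma key_aux2 : ∀ a b c d e f a' b' c' d' e' f' : ZMod 2,
    (a + d + e + f = a' + d' + e' + f' ∧ b + c + d + e = b' + c' + d' + e')
    → ∃ w w' : ZMod 2, (a + d + e + f, b + w + e + f, c + w + d + f)
      = (a' + d' + e' + f', b' + w' + e' + f', c' + w' + d' + f') := by
  intro a b c d e f a' b' c' d' e' f' h
  obtain ⟨h1, h2⟩ := h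
  refine ⟨0, b + e + f + b' + e' + f', ?_⟩
  rw [Prod.mk.injEq, Prod.mk.injEq]
  have hb : b + b = 0 := CharTwo.add_self_eq_zero b
  have he : e + e = 0 := CharTwo.add_self_eq_zero e
  have hb' : b' + b' = 0 := CharTwo.add_self_eq_zero b'
  have he' : e' + e' = 0 := CharTwo.add_self_eq_zero e'
  have hf' : f' + f' = 0 := CharTwo.add_self_eq_zero f'
  refine ⟨h1, by linear_combination - hb' - he' - hf', ?_⟩
  linear_combination h2 - hb - he - hf' 

/-- Kovalevskaya case, region V: the reduced Boolean vector-function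
`z₁ = u₁⊕u₇⊕u₈⊕u₉`, `z₂ = u₂⊕u₆⊕u₈⊕u₉`, `z₇ = u₃⊕u₆⊕u₇⊕u₉` with first group
`(u₁,u₂,u₃,u₇,u₈,u₉)` and second group `u₆` has exactly 4 classes. -/
theorem stmt_18
    (F : (Fin 6 → ZMod 2) → ZMod 2 → (ZMod 2 × ZMod 2 × ZMod 2))
    (hF : ∀ (v : Fin 6 → ZMod 2) (u₆ : ZMod 2),
      -- v 0 = u₁, v 1 = u₂, v 2 = u₃, v 3 = u₇, v 4 = u₈, v 5 = u₉
      F v u₆ = (v 0 + v 3 + v 4 + v 5, v 1 + u₆ + v 4 + v 5, v 2 + u₆ + v 3 + v 5)) :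
    Nat.card (classes F) = 4 := by
  set g : (Fin 6 → ZMod 2) → ZMod 2 × ZMod 2 :=
    fun v => (v 0 + v 3 + v 4 + v 5, v 1 + v 2 + v 3 + v 4) with hg
  have key : ∀ v v', sim F v v' ↔ g v = g v' := by
    intro v v'
    constructor
    · rintro ⟨w, w', h⟩
      rw [hF, hF] at h
      have := key_aux (v 0) (v 1) (v 2) (v 3) (v 4) (v 5)
        (v' 0) (v' 1) (v' 2) (v' 3) (v' 4) (v' 5) w w' h
      simp only [hg, Prod.mk.injEq]
      exact this
    · intro h
      simp only [hg, Prod.mk.injEq] at h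
      obtain ⟨w, w', h⟩ := key_aux2 (v 0) (v 1) (v 2) (v 3) (v 4) (v 5)
        (v' 0) (v' 1) (v' 2) (v' 3) (v' 4) (v' 5) h
      exact ⟨w, w', by rw [hF, hF]; exact h⟩
  have hg_surj : Function.Surjective g := by
    intro p
    refine ⟨fun i => if i = 0 then p.1 else if i = 1 then p.2 else 0, ?_⟩
    simp [hg]
  set h : ZMod 2 × ZMod 2 → Set (Fin 6 → ZMod 2) := fun p => {v | g v = p} with hh
  have hcls : classes F = Set.range h := by
    ext S
    constructor
    · rintro ⟨v, rfl⟩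
      refine ⟨g v, ?_⟩
      ext v'
      simp only [hh, Set.mem_setOf_eq, key]
      exact eq_comm
    · rintro ⟨p, rfl⟩
      obtain ⟨v, rfl⟩ := hg_surj p
      refine ⟨v, ?_⟩
      ext v'
      simp only [hh, Set.mem_setOf_eq, key]
      exact eq_comm
  have hinj : Function.Injective h := by
    intro p q hpq
    obtain ⟨v, rfl⟩ := hg_surj p
    have : v ∈ h (g v) := rfl
    rw [hpq] at this
    exact this
  rw [hcls, Nat.card_range_of_injective hinj]
  simp [Nat.card_eq_fintype_card]
end
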